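/- arXiv:math/9909092 — 2 statements merged into one kernel-verified Lean document; each statement's English description precedes it below -/
import Mathlib

section
/- For any normalized boundary data (ord, b⁰, b¹) of order n, the vectors B_0^0, …, B_{n−1}^0, B_0^1, …, B_{n−1}^1 span all of ℂⁿ; equivalently, the n × 2n matrix Q := (B_0^0, …, B_{n−1}^0, B_0^1, …, B_{n−1}^1) has rank n. -/
open scoped Classical
open Matrix

noncomputable section

/-- `ε_k = exp(2πik/n)`. -/
def eps (n : ℕ) (k : Fin n) : ℂ := Complex.exp (2 * Real.pi * Complex.I * k / n)

/-- The vector `B_k^i` with `m`-th entry `b_m · ε_k^{ord m}`. -/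
def Bvec (n : ℕ) (ord : Fin n → Fin n) (b : Fin n → ℂ) (k : Fin n) : Fin n → ℂ :=
  fun m => b m * eps n k ^ (ord m : ℕ)

/-- Normalized boundary data: every fiber of `ord` has at most two elements and the
corresponding vectors `(b⁰_m, b¹_m) ∈ ℂ²` are linearly independent over each fiber. -/
def NormalizedBC (n : ℕ) (ord : Fin n → Fin n) (b0 b1 : Fin n → ℂ) : Prop :=
  ∀ j : Fin n,
    (Finset.univ.filter (fun m => ord m = j)).card ≤ 2 ∧
    LinearIndependent ℂ (fun m : {m : Fin n // ord m = j} => ![b0 m.1, b1 m.1])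

lemma eps_injective (n : ℕ) (hn : n ≠ 0) : Function.Injective (eps n) := by
  have hprim := Complex.isPrimitiveRoot_exp n hn
  intro k k' h
  have hk : ∀ j : Fin n, eps n j = Complex.exp (2 * Real.pi * Complex.I / n) ^ (j : ℕ) := by
    intro j
    have harg : (2:ℂ) * Real.pi * Complex.I * j / n = (j:ℕ) * (2 * Real.pi * Complex.I / n) := by
      ring
    rw [eps, harg, Complex.exp_nat_mul]
  rw [hk, hk] at h
  exact Fin.ext (hprim.pow_inj k.isLt k'.isLt h)

/-- Key kernel computation: if `c` is orthogonal to all `B_k^0` and `B_k^1`, then `c = 0`. -/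
lemma kernel_trivial (n : ℕ) (hn : 2 ≤ n) (ord : Fin n → Fin n) (b0 b1 : Fin n → ℂ)
    (hnorm : NormalizedBC n ord b0 b1) (c : Fin n → ℂ)
    (h0 : ∀ k : Fin n, ∑ m, c m * Bvec n ord b0 k m = 0)
    (h1 : ∀ k : Fin n, ∑ m, c m * Bvec n ord b1 k m = 0) : c = 0 := by
  have hn0 : n ≠ 0 := by omega
  -- fiberwise sums
  set d0 : Fin n → ℂ := fun j => ∑ m ∈ Finset.univ.filter (fun m => ord m = j), c m * b0 m with hd0
  set d1 : Fin n → ℂ := fun j => ∑ m ∈ Finset.univ.filter (fun m => ord m = j), c m * b1 m with hd1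
  have key : ∀ (b : Fin n → ℂ), (∀ k : Fin n, ∑ m, c m * Bvec n ord b k m = 0) →
      (fun j => ∑ m ∈ Finset.univ.filter (fun m => ord m = j), c m * b m) = 0 := by
    intro b hb
    apply Matrix.eq_zero_of_forall_index_sum_mul_pow_eq_zero (eps_injective n hn0)
    intro k
    rw [← hb k]
    rw [← Finset.sum_fiberwise (Finset.univ) ord (fun m => c m * Bvec n ord b k m)]
    refine Finset.sum_congr rfl (fun j _ => ?_)
    rw [Finset.sum_mul]
    refine Finset.sum_congr rfl (fun m hm => ?_)
    have : ord m = j := (Finset.mem_filter.mp hm).2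
    simp [Bvec, this]
    ring
  have hd0z := key b0 h0
  have hd1z := key b1 h1
  funext m
  have hli := (hnorm (ord m)).2
  have hsum : ∑ x : {m' : Fin n // ord m' = ord m}, c x.1 • ![b0 x.1, b1 x.1] = 0 := by
    funext i
    fin_cases i
    · show (∑ x : {m' : Fin n // ord m' = ord m}, c x.1 • ![b0 x.1, b1 x.1]) 0 = 0
      have h := congrFun hd0z (ord m)
      simp only [Pi.zero_apply] at h
      rw [Finset.sum_apply]
      simp only [Pi.smul_apply, smul_eq_mul, Matrix.cons_val_zero]
      rw [← h, Finset.sum_subtype (p := fun m' => ord m' = ord m)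
        (Finset.univ.filter (fun m' => ord m' = ord m))
        (fun x => by simp) (fun m' => c m' * b0 m')]
    · show (∑ x : {m' : Fin n // ord m' = ord m}, c x.1 • ![b0 x.1, b1 x.1]) 1 = 0
      have h := congrFun hd1z (ord m)
      simp only [Pi.zero_apply] at h
      rw [Finset.sum_apply]
      simp only [Pi.smul_apply, smul_eq_mul, Matrix.cons_val_one, Matrix.head_cons, Matrix.cons_val_zero]
      rw [← h, Finset.sum_subtype (p := fun m' => ord m' = ord m)
        (Finset.univ.filter (fun m' => ord m' = ord m))
        (fun x => by simp) (fun m' => c m' * b1 m')]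
  have := Fintype.linearIndependent_iff.mp hli (fun x => c x.1) hsum ⟨m, rfl⟩
  simpa using this

/-- For normalized boundary data the vectors `B_0^0,…,B_{n-1}^0,B_0^1,…,B_{n-1}^1`
span all of `ℂⁿ`; equivalently, the `n × 2n` matrix
`Q = (B_0^0, …, B_{n-1}^0, B_0^1, …, B_{n-1}^1)` has rank `n`. -/
theorem Bvec_span_top_and_rank
    (n : ℕ) (hn : 2 ≤ n) (ord : Fin n → Fin n) (b0 b1 : Fin n → ℂ)
    (hnorm : NormalizedBC n ord b0 b1) :
    Submodule.span ℂ
        (Set.range (fun k : Fin n => Bvec n ord b0 k) ∪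
         Set.range (fun k : Fin n => Bvec n ord b1 k)) = ⊤ ∧
    (Matrix.of (fun (m : Fin n) (k : Fin n ⊕ Fin n) =>
        Sum.elim (fun k => Bvec n ord b0 k m) (fun k => Bvec n ord b1 k m) k)).rank = n := by
  set Q : Matrix (Fin n) (Fin n ⊕ Fin n) ℂ :=
    Matrix.of (fun (m : Fin n) (k : Fin n ⊕ Fin n) =>
        Sum.elim (fun k => Bvec n ord b0 k m) (fun k => Bvec n ord b1 k m) k) with hQ
  -- Qᵀ.mulVecLin is injective
  have hinj : Function.Injective (Qᵀ.mulVecLin) := by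
    rw [← LinearMap.ker_eq_bot, LinearMap.ker_eq_bot']
    intro c hc
    apply kernel_trivial n hn ord b0 b1 hnorm c
    · intro k
      have := congrFun hc (Sum.inl k)
      simpa [Matrix.mulVecLin, Matrix.mulVec, Matrix.vecMul, dotProduct, hQ, mul_comm] using this
    · intro k
      have := congrFun hc (Sum.inr k)
      simpa [Matrix.mulVecLin, Matrix.mulVec, Matrix.vecMul, dotProduct, hQ, mul_comm] using this
  have hrankT : Qᵀ.rank = n := by
    rw [Matrix.rank, LinearMap.finrank_range_of_inj hinj]
    simp
  have hrank : Q.rank = n := by rw [← Matrix.rank_transpose]; exact hrankT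
  have htop : LinearMap.range Q.mulVecLin = ⊤ := by
    apply Submodule.eq_top_of_finrank_eq
    rw [← Matrix.rank, hrank]
    simp
  have hspan : Submodule.span ℂ (Set.range Qᵀ) = ⊤ := by
    rw [show Set.range Qᵀ = Set.range (Matrix.col Q) from rfl, ← Matrix.range_mulVecLin, htop]
  constructor
  · rw [← hspan]
    congr 1
    have : Qᵀ = Sum.elim (fun k : Fin n => Bvec n ord b0 k) (fun k : Fin n => Bvec n ord b1 k) := by
      funext i m
      cases i <;> rfl
    rw [this, Set.Sum.elim_range]
  · exact hrank
end
end

section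
/- Define the kernel g₀(x, ξ; ρ) := (i/(n ρ^{n−1})) Σ_{k ∈ P} ε_k² e^{iρε_k(x−ξ)} for 0 ≤ ξ < x ≤ 1, and g₀(x, ξ; ρ) := −(i/(n ρ^{n−1})) Σ_{k ∉ P} ε_k² e^{iρε_k(x−ξ)} for 0 ≤ x < ξ ≤ 1 (this is the particular-solution kernel of the model equation Dⁿy = λy + f, λ = ρⁿ). Then there exist constants C > 0 and R₀ > 0, depending only on n and α, such that for every ρ with arg ρ = α/n and |ρ| ≥ R₀, the integral operator f ↦ ∫₀¹ g₀(·, ξ; ρ) f(ξ) dξ is bounded on L²(0,1) with operator norm at most C · |ρ|^{−n}. -/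
open MeasureTheory Set
open scoped Classical

noncomputable section

/-- The index set `P = {k : Im(ρ ε_k) > 0}`; it does not depend on the choice of
`ρ` on the ray `arg ρ = α/n`, so it is computed at the base point `exp(i α/n)`. -/
def Pset (n : ℕ) (α : ℝ) : Finset (Fin n) :=
  Finset.univ.filter fun k => 0 < (Complex.exp (Complex.I * (α / n)) * eps n k).im

/-- The particular-solution kernel of the model equation `Dⁿy = λy + f`, `λ = ρⁿ`:
`g₀(x,ξ;ρ) = (i/(nρ^{n-1})) Σ_{k∈P} ε_k² e^{iρε_k(x-ξ)}` for `ξ < x` and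
`g₀(x,ξ;ρ) = -(i/(nρ^{n-1})) Σ_{k∉P} ε_k² e^{iρε_k(x-ξ)}` for `x < ξ`. -/
def g0ker (n : ℕ) (α : ℝ) (ρ : ℂ) (x ξ : ℝ) : ℂ :=
  if ξ < x then
    Complex.I / (n * ρ ^ (n - 1)) *
      ∑ k ∈ Pset n α, eps n k ^ 2 * Complex.exp (Complex.I * ρ * eps n k * (x - ξ))
  else
    -(Complex.I / (n * ρ ^ (n - 1))) *
      ∑ k ∈ (Pset n α)ᶜ, eps n k ^ 2 * Complex.exp (Complex.I * ρ * eps n k * (x - ξ))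

open scoped ENNReal NNReal

lemma eps_eq (n : ℕ) (k : Fin n) :
    eps n k = Complex.exp ((2 * Real.pi * k / n : ℝ) * Complex.I) := by
  unfold eps; congr 1; push_cast; ring

lemma abs_eps (n : ℕ) (k : Fin n) : ‖eps n k‖ = 1 := by
  rw [eps_eq]; exact Complex.norm_exp_ofReal_mul_I _

lemma base_mul_eps_im (n : ℕ) (α : ℝ) (k : Fin n) :
    (Complex.exp (Complex.I * (α / n)) * eps n k).im
      = Real.sin (α / n + 2 * Real.pi * k / n) := by
  rw [eps_eq, show Complex.I * ((α : ℂ) / n) = ((α / n : ℝ) : ℂ) * Complex.I by push_cast; ring,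
    ← Complex.exp_add, ← add_mul, ← Complex.ofReal_add, Complex.exp_ofReal_mul_I_im]

lemma mem_Pset_iff (n : ℕ) (α : ℝ) (k : Fin n) :
    k ∈ Pset n α ↔ 0 < Real.sin (α / n + 2 * Real.pi * k / n) := by
  unfold Pset
  rw [Finset.mem_filter, base_mul_eps_im]
  simp

lemma sin_theta_ne_zero {n : ℕ} (hn : 2 ≤ n) {α : ℝ} (hα : α ∈ Ioo Real.pi (2 * Real.pi))
    (k : Fin n) : Real.sin (α / n + 2 * Real.pi * k / n) ≠ 0 := by
  intro h
  rw [Real.sin_eq_zero_iff] at h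
  obtain ⟨m, hm⟩ := h
  have hn0 : (n : ℝ) ≠ 0 := by positivity
  have hπ := Real.pi_pos
  have hα1 := hα.1
  have hα2 := hα.2
  have hα_eq : α = ((m * n - 2 * k : ℤ) : ℝ) * Real.pi := by
    push_cast
    have h2 : (m : ℝ) * Real.pi * n = (α / n + 2 * Real.pi * k / n) * n := by rw [hm]
    field_simp at h2
    nlinarith [h2]
  set j : ℤ := m * n - 2 * k with hj
  rw [hα_eq] at hα1 hα2
  have h1 : (1 : ℝ) < (j : ℝ) := by
    by_contra hcon
    push_neg at hcon
    nlinarith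
  have h2 : (j : ℝ) < 2 := by
    by_contra hcon
    push_neg at hcon
    nlinarith
  have h1' : (1 : ℤ) < j := by exact_mod_cast h1
  have h2' : j < 2 := by exact_mod_cast h2
  omega

lemma meas_minorant_ae_max {α : Type*} [MeasurableSpace α] {μ : Measure α}
    {h g u : α → ℝ≥0∞} (hg : Measurable g) (hu : Measurable u)
    (hgh : g ≤ h) (huh : u ≤ h) (heq : ∫⁻ a, h a ∂μ = ∫⁻ a, g a ∂μ)
    (hfin : ∫⁻ a, h a ∂μ ≠ ⊤) : u ≤ᵐ[μ] g := by
  set v : α → ℝ≥0∞ := fun a => max (u a) (g a) with hv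
  have hvmeas : Measurable v := hu.max hg
  have hgv : g ≤ v := fun a => le_max_right _ _
  have hvh : v ≤ h := fun a => max_le (huh a) (hgh a)
  have h1 : ∫⁻ a, v a ∂μ ≤ ∫⁻ a, g a ∂μ := heq ▸ lintegral_mono hvh
  have h2 : ∫⁻ a, g a ∂μ ≤ ∫⁻ a, v a ∂μ := lintegral_mono hgv
  have hge : ∫⁻ a, v a ∂μ = ∫⁻ a, g a ∂μ := le_antisymm h1 h2
  have hgfin : ∫⁻ a, g a ∂μ ≠ ⊤ := by rw [← heq]; exact hfin
  have hsub : ∫⁻ a, v a - g a ∂μ = 0 := by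
    rw [lintegral_sub hg hgfin (Filter.Eventually.of_forall hgv), hge, tsub_self]
  have : ∀ᵐ a ∂μ, v a - g a = 0 := (lintegral_eq_zero_iff (hvmeas.sub hg)).mp hsub
  filter_upwards [this] with a ha
  exact le_trans (le_max_left _ _) (tsub_eq_zero_iff_le.mp ha)

lemma exists_meas_minorant_forall_mul {α : Type*} [MeasurableSpace α] {μ : Measure α}
    (h : α → ℝ≥0∞) (hfin : ∫⁻ a, h a ∂μ ≠ ⊤) :
    ∃ g : α → ℝ≥0∞, Measurable g ∧ g ≤ h ∧
      ∀ k : α → ℝ≥0∞, Measurable k → (∀ a, k a ≠ ⊤) →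
        ∫⁻ a, k a * h a ∂μ = ∫⁻ a, k a * g a ∂μ := by
  obtain ⟨g, hgm, hgh, heq⟩ := exists_measurable_le_lintegral_eq μ h
  refine ⟨g, hgm, hgh, fun k hk hktop => ?_⟩
  refine le_antisymm ?_ (lintegral_mono fun a => mul_le_mul_right (hgh a) _)
  rw [lintegral]
  refine iSup₂_le fun s hs => ?_
  set u : α → ℝ≥0∞ := fun a => s a / k a with hudef
  have hum : Measurable u := s.measurable.div hk
  have hsu : ∀ a, s a = k a * u a := by
    intro a
    by_cases hk0 : k a = 0
    · have : s a ≤ k a * h a := hs a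
      rw [hk0, zero_mul] at this
      simp [hudef, hk0, le_zero_iff.mp this]
    · rw [hudef]
      exact (ENNReal.mul_div_cancel hk0 (hktop a)).symm
  have huh : u ≤ h := by
    intro a
    by_cases hk0 : k a = 0
    · have : s a ≤ k a * h a := hs a
      rw [hk0, zero_mul] at this
      simp [hudef, hk0, le_zero_iff.mp this]
    · rw [hudef, ENNReal.div_le_iff hk0 (hktop a)]
      calc s a ≤ k a * h a := hs a
        _ = h a * k a := mul_comm _ _
  have hug : u ≤ᵐ[μ] g := meas_minorant_ae_max hgm hum hgh huh heq hfin
  calc s.lintegral μ = ∫⁻ a, s a ∂μ := (s.lintegral_eq_lintegral μ).symm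
    _ = ∫⁻ a, k a * u a ∂μ := by simp_rw [← hsu]
    _ ≤ ∫⁻ a, k a * g a ∂μ := lintegral_mono_ae (hug.mono fun a ha => mul_le_mul_right ha _)

lemma exp_decay_piece {c : ℝ} (hc : 0 < c) (d : ℝ) :
    ∫ t in (0:ℝ)..d, Real.exp (-(c * t)) ≤ 1 / c := by
  have h1 : ∀ t : ℝ, Real.exp (-(c * t)) = Real.exp (-c * t) := by intro t; ring_nf
  simp_rw [h1]
  rw [intervalIntegral.integral_comp_mul_left Real.exp (neg_ne_zero.mpr hc.ne')]
  simp only [mul_zero, smul_eq_mul, Real.exp_zero, integral_exp]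
  have he := Real.exp_pos (-c * d)
  have hci : 0 < c⁻¹ := inv_pos.mpr hc
  rw [one_div, inv_neg]
  nlinarith [mul_pos hci he]

lemma exp_decay_interval {c : ℝ} (hc : 0 < c) {x : ℝ} (hx : x ∈ Icc (0:ℝ) 1) :
    ∫⁻ ξ in Ioo (0:ℝ) 1, ENNReal.ofReal (Real.exp (-(c * |x - ξ|))) ≤
      ENNReal.ofReal (2 / c) := by
  obtain ⟨hx0, hx1⟩ := hx
  have hcont : Continuous fun ξ : ℝ => Real.exp (-(c * |x - ξ|)) := by continuity
  have hint : IntegrableOn (fun ξ => Real.exp (-(c * |x - ξ|))) (Ioo 0 1) volume :=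
    hcont.integrableOn_Icc.mono_set Ioo_subset_Icc_self
  rw [← ofReal_integral_eq_lintegral_ofReal hint
      (Filter.Eventually.of_forall fun ξ => (Real.exp_pos _).le)]
  refine ENNReal.ofReal_le_ofReal ?_
  rw [← integral_Ioc_eq_integral_Ioo, ← intervalIntegral.integral_of_le zero_le_one]
  have hii : ∀ a b : ℝ, IntervalIntegrable (fun ξ => Real.exp (-(c * |x - ξ|))) volume a b :=
    fun a b => hcont.intervalIntegrable a b
  rw [← intervalIntegral.integral_add_adjacent_intervals (hii 0 x) (hii x 1)]
  have p1 : ∫ ξ in (0:ℝ)..x, Real.exp (-(c * |x - ξ|)) ≤ 1 / c := by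
    have heq : ∫ ξ in (0:ℝ)..x, Real.exp (-(c * |x - ξ|))
        = ∫ ξ in (0:ℝ)..x, Real.exp (-(c * (x - ξ))) := by
      refine intervalIntegral.integral_congr fun ξ hξ => ?_
      rw [uIcc_of_le hx0] at hξ
      rw [abs_of_nonneg (by linarith [hξ.2])]
    rw [heq]
    have hcs := intervalIntegral.integral_comp_sub_left (a := (0:ℝ)) (b := x)
      (fun t => Real.exp (-(c * t))) x
    simp only [sub_self, sub_zero] at hcs
    rw [hcs]
    exact exp_decay_piece hc x
  have p2 : ∫ ξ in x..(1:ℝ), Real.exp (-(c * |x - ξ|)) ≤ 1 / c := by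
    have heq : ∫ ξ in x..(1:ℝ), Real.exp (-(c * |x - ξ|))
        = ∫ ξ in x..(1:ℝ), Real.exp (-(c * (ξ - x))) := by
      refine intervalIntegral.integral_congr fun ξ hξ => ?_
      rw [uIcc_of_le hx1] at hξ
      rw [abs_sub_comm, abs_of_nonneg (by linarith [hξ.1])]
    rw [heq]
    have hcs := intervalIntegral.integral_comp_sub_right (a := x) (b := (1:ℝ))
      (fun t => Real.exp (-(c * t))) x
    simp only [sub_self] at hcs
    rw [hcs]
    exact exp_decay_piece hc (1 - x)
  calc _ ≤ 1/c + 1/c := add_le_add p1 p2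
    _ = 2 / c := by ring

lemma g0ker_measurable (n : ℕ) (α : ℝ) (ρ : ℂ) (x : ℝ) :
    Measurable fun ξ => g0ker n α ρ x ξ := by
  unfold g0ker
  refine Measurable.ite (measurableSet_lt measurable_id measurable_const) ?_ ?_
  · apply Continuous.measurable
    refine continuous_const.mul (continuous_finset_sum _ fun k _ => continuous_const.mul ?_)
    exact Complex.continuous_exp.comp (continuous_const.mul
      (continuous_const.sub (Complex.continuous_ofReal.comp continuous_id)))
  · apply Continuous.measurable
    refine continuous_const.mul (continuous_finset_sum _ fun k _ => continuous_const.mul ?_)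
    exact Complex.continuous_exp.comp (continuous_const.mul
      (continuous_const.sub (Complex.continuous_ofReal.comp continuous_id)))

lemma g0ker_norm_le {n : ℕ} (hn : 2 ≤ n) {α : ℝ} (hα : α ∈ Ioo Real.pi (2 * Real.pi))
    {ρ : ℂ} (harg : Complex.arg ρ = α / n) (hr0 : 0 < ‖ρ‖)
    {δ : ℝ} (hδpos : 0 < δ)
    (hδle : ∀ k : Fin n, δ ≤ |Real.sin (α / n + 2 * Real.pi * k / n)|)
    (x ξ : ℝ) :
    ‖g0ker n α ρ x ξ‖ ≤ ((‖ρ‖) ^ (n-1))⁻¹ *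
      Real.exp (-(δ * ‖ρ‖ * |x - ξ|)) := by
  set θ : Fin n → ℝ := fun k => α / n + 2 * Real.pi * k / n with hθ
  set r : ℝ := ‖ρ‖ with hrdef
  set c : ℝ := δ * r with hcdef
  have hcpos : 0 < c := mul_pos hδpos hr0
  have hρeps : ∀ k : Fin n, ρ * eps n k = (r:ℂ) * Complex.exp ((θ k : ℝ) * Complex.I) := by
    intro k
    conv_lhs => rw [← Complex.norm_mul_exp_arg_mul_I ρ]
    rw [harg, eps_eq, mul_assoc, ← Complex.exp_add, ← add_mul, hθ]
    norm_cast
  have habs_exp : ∀ (k : Fin n) (t : ℝ),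
      ‖Complex.exp (Complex.I * ρ * eps n k * (t : ℂ))‖
        = Real.exp (-(r * Real.sin (θ k)) * t) := by
    intro k t
    rw [Complex.norm_exp]
    congr 1
    rw [mul_assoc Complex.I ρ (eps n k), hρeps k]
    simp [Complex.mul_re, Complex.mul_im, Complex.exp_ofReal_mul_I_re,
      Complex.exp_ofReal_mul_I_im]
  have hnpos : (0:ℝ) < n := by
    have : 0 < n := by omega
    exact_mod_cast this
  have hEpos := Real.exp_pos (-(c * |x - ξ|))
  have hpre : ‖Complex.I / ((n : ℂ) * ρ ^ (n-1))‖ = ((n:ℝ) * r ^ (n-1))⁻¹ := by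
    rw [norm_div, Complex.norm_I, norm_mul, norm_pow]
    simp [hrdef, one_div]
  have hcast : ((x:ℂ) - (ξ:ℂ)) = ((x - ξ : ℝ) : ℂ) := by push_cast; ring
  unfold g0ker
  split_ifs with hlt
  · have habsxy : |x - ξ| = x - ξ := abs_of_pos (by linarith)
    have hterm : ∀ k ∈ Pset n α,
        ‖eps n k ^ 2 * Complex.exp (Complex.I * ρ * eps n k * ((x:ℂ) - (ξ:ℂ)))‖
          ≤ Real.exp (-(c * |x - ξ|)) := by
      intro k hk
      have hsink : 0 < Real.sin (θ k) := (mem_Pset_iff n α k).mp hk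
      have hδs : δ ≤ Real.sin (θ k) := by
        have := hδle k
        rwa [abs_of_pos hsink] at this
      rw [norm_mul, norm_pow, abs_eps, one_pow,
        one_mul, hcast, habs_exp k (x - ξ)]
      refine Real.exp_le_exp.mpr ?_
      rw [habsxy, hcdef]
      nlinarith [mul_le_mul_of_nonneg_left hδs hr0.le]
    have hS : ‖∑ k ∈ Pset n α, eps n k ^ 2 *
        Complex.exp (Complex.I * ρ * eps n k * ((x:ℂ) - (ξ:ℂ)))‖
          ≤ (n:ℝ) * Real.exp (-(c * |x - ξ|)) := by
      refine le_trans (norm_sum_le _ _) ?_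
      refine le_trans (Finset.sum_le_card_nsmul _ _ _ hterm) ?_
      rw [nsmul_eq_mul]
      have hcard : ((Pset n α).card : ℝ) ≤ (n:ℝ) := by
        have := Finset.card_le_univ (Pset n α)
        simp only [Finset.card_univ, Fintype.card_fin] at this
        exact_mod_cast this
      exact mul_le_mul_of_nonneg_right hcard hEpos.le
    rw [norm_mul, hpre]
    calc ((n:ℝ) * r ^ (n-1))⁻¹ * ‖_‖
        ≤ ((n:ℝ) * r ^ (n-1))⁻¹ * ((n:ℝ) * Real.exp (-(c * |x - ξ|))) :=
          mul_le_mul_of_nonneg_left hS (by positivity)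
      _ = (r ^ (n-1))⁻¹ * Real.exp (-(c * |x - ξ|)) := by
          field_simp
  · have hxle : x ≤ ξ := le_of_not_gt hlt
    have habsxy : |x - ξ| = ξ - x := by rw [abs_sub_comm, abs_of_nonneg (by linarith)]
    have hterm : ∀ k ∈ (Pset n α)ᶜ,
        ‖eps n k ^ 2 * Complex.exp (Complex.I * ρ * eps n k * ((x:ℂ) - (ξ:ℂ)))‖
          ≤ Real.exp (-(c * |x - ξ|)) := by
      intro k hk
      rw [Finset.mem_compl] at hk
      have hsin_ne := sin_theta_ne_zero hn hα k
      have hsink : Real.sin (θ k) < 0 := by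
        rcases lt_trichotomy (Real.sin (θ k)) 0 with h | h | h
        · exact h
        · exact absurd h hsin_ne
        · exact absurd ((mem_Pset_iff n α k).mpr h) hk
      have hδs : Real.sin (θ k) ≤ -δ := by
        have := hδle k
        rw [hθ] at *
        rw [abs_of_neg hsink] at this
        linarith
      rw [norm_mul, norm_pow, abs_eps, one_pow,
        one_mul, hcast, habs_exp k (x - ξ)]
      refine Real.exp_le_exp.mpr ?_
      rw [habsxy, hcdef]
      nlinarith [mul_le_mul_of_nonneg_left hδs hr0.le]
    have hS : ‖∑ k ∈ (Pset n α)ᶜ, eps n k ^ 2 *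
        Complex.exp (Complex.I * ρ * eps n k * ((x:ℂ) - (ξ:ℂ)))‖
          ≤ (n:ℝ) * Real.exp (-(c * |x - ξ|)) := by
      refine le_trans (norm_sum_le _ _) ?_
      refine le_trans (Finset.sum_le_card_nsmul _ _ _ hterm) ?_
      rw [nsmul_eq_mul]
      have hcard : (((Pset n α)ᶜ).card : ℝ) ≤ (n:ℝ) := by
        have := Finset.card_le_univ ((Pset n α)ᶜ)
        simp only [Finset.card_univ, Fintype.card_fin] at this
        exact_mod_cast this
      exact mul_le_mul_of_nonneg_right hcard hEpos.le
    rw [norm_mul, norm_neg, hpre]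
    calc ((n:ℝ) * r ^ (n-1))⁻¹ * ‖_‖
        ≤ ((n:ℝ) * r ^ (n-1))⁻¹ * ((n:ℝ) * Real.exp (-(c * |x - ξ|))) :=
          mul_le_mul_of_nonneg_left hS (by positivity)
      _ = (r ^ (n-1))⁻¹ * Real.exp (-(c * |x - ξ|)) := by
          field_simp
/-- The integral operator with kernel `g₀` is bounded on `L²(0,1)` with operator
norm at most `C · |ρ|⁻ⁿ`, uniformly on the ray `arg ρ = α/n`, `|ρ| ≥ R₀`. -/
theorem g0_integral_operator_norm_bound
    (n : ℕ) (hn : 2 ≤ n) (α : ℝ) (hα : α ∈ Ioo Real.pi (2 * Real.pi)) :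
    ∃ C > (0 : ℝ), ∃ R₀ > (0 : ℝ), ∀ ρ : ℂ,
      Complex.arg ρ = α / n → R₀ ≤ ‖ρ‖ →
      ∀ f : ℝ → ℂ,
        eLpNorm (fun x => ∫ ξ in (0 : ℝ)..1, g0ker n α ρ x ξ * f ξ) 2
            (volume.restrict (Ioo 0 1)) ≤
          ENNReal.ofReal (C / ‖ρ‖ ^ n) *
            eLpNorm f 2 (volume.restrict (Ioo 0 1)) := by
  haveI : NeZero n := ⟨by omega⟩
  have hne : (Finset.univ : Finset (Fin n)).Nonempty := Finset.univ_nonempty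
  set δ : ℝ := Finset.univ.inf' hne fun k : Fin n =>
    |Real.sin (α / n + 2 * Real.pi * k / n)| with hδdef
  have hδpos : 0 < δ := by
    rw [hδdef, Finset.lt_inf'_iff]
    exact fun k _ => abs_pos.mpr (sin_theta_ne_zero hn hα k)
  have hδle : ∀ k : Fin n, δ ≤ |Real.sin (α / n + 2 * Real.pi * k / n)| :=
    fun k => Finset.inf'_le _ (Finset.mem_univ k)
  refine ⟨2 / δ, by positivity, 1, one_pos, fun ρ harg hrge f => ?_⟩
  set μ : Measure ℝ := volume.restrict (Ioo 0 1) with hμdef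
  set r : ℝ := ‖ρ‖ with hrdef
  have hr0 : 0 < r := lt_of_lt_of_le one_pos hrge
  set c : ℝ := δ * r with hcdef
  have hcpos : 0 < c := mul_pos hδpos hr0
  have hker := g0ker_norm_le hn hα harg hr0 hδpos hδle
  -- trivial case
  by_cases htop : eLpNorm f 2 μ = ⊤
  · rw [htop, ENNReal.mul_top]
    · exact le_top
    · rw [Ne, ENNReal.ofReal_eq_zero, not_le]
      positivity
  -- basic facts about p = 2 norms
  have heLp : ∀ u : ℝ → ℂ, eLpNorm u 2 μ
      = (∫⁻ a, (‖u a‖₊ : ℝ≥0∞) ^ (2:ℝ) ∂μ) ^ (1/2 : ℝ) := by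
    intro u
    rw [eLpNorm_eq_lintegral_rpow_enorm_toReal (by norm_num) (by norm_num)]
    simp only [enorm_eq_nnnorm]
    norm_num
  have hsq : ∀ y : ℝ≥0∞, y ^ (2:ℝ) = y * y := fun y => by
    rw [show (2:ℝ) = ((2:ℕ):ℝ) by norm_num, ENNReal.rpow_natCast, sq]
  have hhalf : ∀ y : ℝ≥0∞, y ^ (1/2:ℝ) * y ^ (1/2:ℝ) = y := fun y => by
    rw [← hsq, ← ENNReal.rpow_mul]
    norm_num
  have hsqrt : ∀ y : ℝ≥0∞, (y * y) ^ (1/2:ℝ) = y := fun y => by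
    rw [← hsq, ← ENNReal.rpow_mul]
    norm_num
  have hI2 : ∫⁻ ξ, (‖f ξ‖₊ : ℝ≥0∞) ^ (2:ℝ) ∂μ ≠ ⊤ := by
    intro hcon
    apply htop
    rw [heLp f, hcon, ENNReal.top_rpow_of_pos (by norm_num)]
  have hI1 : ∫⁻ ξ, (‖f ξ‖₊ : ℝ≥0∞) ∂μ ≠ ⊤ := by
    have hb : ∀ ξ : ℝ, (‖f ξ‖₊ : ℝ≥0∞) ≤ 1 + (‖f ξ‖₊ : ℝ≥0∞) ^ (2:ℝ) := by
      intro ξ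
      rcases le_total ((‖f ξ‖₊ : ℝ≥0∞)) 1 with hle | hle
      · exact hle.trans le_self_add
      · rw [hsq]
        calc (‖f ξ‖₊ : ℝ≥0∞) = (‖f ξ‖₊ : ℝ≥0∞) * 1 := (mul_one _).symm
          _ ≤ (‖f ξ‖₊ : ℝ≥0∞) * (‖f ξ‖₊ : ℝ≥0∞) := mul_le_mul_right hle _
          _ ≤ 1 + (‖f ξ‖₊ : ℝ≥0∞) * (‖f ξ‖₊ : ℝ≥0∞) := le_add_self
    refine ne_top_of_le_ne_top ?_ (lintegral_mono hb)
    rw [lintegral_add_left measurable_const]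
    refine ENNReal.add_ne_top.mpr ⟨?_, hI2⟩
    rw [lintegral_const]
    exact ENNReal.mul_ne_top ENNReal.one_ne_top
      (by rw [hμdef, Measure.restrict_apply_univ, Real.volume_Ioo]; exact ENNReal.ofReal_ne_top)
  obtain ⟨g, hgm, hgh, hmul⟩ :=
    exists_meas_minorant_forall_mul (μ := μ) (fun ξ => (‖f ξ‖₊ : ℝ≥0∞)) hI1
  -- exponential kernels
  set κ : ℝ → ℝ≥0∞ := fun t => ENNReal.ofReal (Real.exp (-(c * |t|))) with hκdef
  set κh : ℝ → ℝ≥0∞ := fun t => ENNReal.ofReal (Real.exp (-(c/2 * |t|))) with hκhdef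
  have hκh2 : ∀ t, κh t * κh t = κ t := by
    intro t
    rw [hκhdef, hκdef]
    simp only
    rw [← ENNReal.ofReal_mul (Real.exp_pos _).le, ← Real.exp_add]
    congr 2
    ring
  have hκhm : ∀ x : ℝ, Measurable fun ξ => κh (x - ξ) := by
    intro x
    apply Measurable.ennreal_ofReal
    apply Continuous.measurable
    exact Real.continuous_exp.comp ((continuous_const.mul ((continuous_const.sub continuous_id).abs)).neg)
  set A2 : ℝ≥0∞ := ENNReal.ofReal (2/c) with hA2def
  have hA2top : A2 ≠ ⊤ := ENNReal.ofReal_ne_top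
  set a : ℝ≥0∞ := ENNReal.ofReal ((r ^ (n-1))⁻¹) with hadef
  have hatop : a ≠ ⊤ := ENNReal.ofReal_ne_top
  have hκint : ∀ x ∈ Icc (0:ℝ) 1, ∫⁻ ξ, κ (x - ξ) ∂μ ≤ A2 := by
    intro x hx
    rw [hμdef, hA2def]
    exact exp_decay_interval hcpos hx
  have hκintx : ∀ ξ ∈ Icc (0:ℝ) 1, ∫⁻ x, κ (x - ξ) ∂μ ≤ A2 := by
    intro ξ hξ
    have habs : ∀ x : ℝ, κ (x - ξ) = ENNReal.ofReal (Real.exp (-(c * |ξ - x|))) := by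
      intro x
      rw [hκdef]
      simp only
      rw [abs_sub_comm]
    simp_rw [habs]
    rw [hμdef, hA2def]
    exact exp_decay_interval hcpos hξ
  set J : ℝ → ℝ≥0∞ := fun x => ∫⁻ ξ, κ (x - ξ) * g ξ ∂μ with hJdef
  -- Step A : pointwise bound by the convolution-type integral
  have hstepA : ∀ x : ℝ,
      (‖∫ ξ in (0:ℝ)..1, g0ker n α ρ x ξ * f ξ‖₊ : ℝ≥0∞) ≤ a * J x := by
    intro x
    have hres : volume.restrict (Ioc (0:ℝ) 1) = μ := by
      rw [hμdef]
      exact (Measure.restrict_congr_set Ioo_ae_eq_Ioc).symm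
    rw [intervalIntegral.integral_of_le zero_le_one]
    refine le_trans (enorm_integral_le_lintegral_enorm _) ?_
    rw [hres]
    simp only [enorm_eq_nnnorm]
    have heq : ∫⁻ ξ, (‖g0ker n α ρ x ξ * f ξ‖₊ : ℝ≥0∞) ∂μ
        = ∫⁻ ξ, (fun ξ => (‖g0ker n α ρ x ξ‖₊ : ℝ≥0∞)) ξ * (‖f ξ‖₊ : ℝ≥0∞) ∂μ := by
      refine lintegral_congr fun ξ => ?_
      rw [nnnorm_mul, ENNReal.coe_mul]
    rw [heq, hmul _ ((g0ker_measurable n α ρ x).nnnorm.coe_nnreal_ennreal)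
      (fun ξ => ENNReal.coe_ne_top)]
    have hb : ∀ ξ : ℝ, (‖g0ker n α ρ x ξ‖₊ : ℝ≥0∞) * g ξ ≤ a * (κ (x - ξ) * g ξ) := by
      intro ξ
      rw [← mul_assoc]
      refine mul_le_mul_left ?_ _
      rw [← enorm_eq_nnnorm, ← ofReal_norm_eq_enorm, hadef, hκdef]
      simp only
      rw [← ENNReal.ofReal_mul (by positivity)]
      exact ENNReal.ofReal_le_ofReal (by simpa [hcdef] using hker x ξ)
    refine le_trans (lintegral_mono hb) ?_
    rw [lintegral_const_mul' _ _ hatop]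
  -- Step B : Cauchy-Schwarz
  set W : ℝ → ℝ≥0∞ := fun x => ∫⁻ ξ, κ (x - ξ) * (g ξ * g ξ) ∂μ with hWdef
  have hstepB : ∀ x ∈ Icc (0:ℝ) 1, J x ≤ A2 ^ (1/2:ℝ) * (W x) ^ (1/2:ℝ) := by
    intro x hx
    have hconj : Real.HolderConjugate 2 2 := Real.HolderConjugate.two_two
    have hF : Measurable fun ξ => κh (x - ξ) := hκhm x
    have hG : Measurable fun ξ => κh (x - ξ) * g ξ := hF.mul hgm
    have hcs := ENNReal.lintegral_mul_le_Lp_mul_Lq μ hconj hF.aemeasurable hG.aemeasurable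
    have h1 : J x = ∫⁻ ξ, ((fun ξ => κh (x-ξ)) * fun ξ => κh (x-ξ) * g ξ) ξ ∂μ := by
      rw [hJdef]
      refine lintegral_congr fun ξ => ?_
      rw [Pi.mul_apply, ← mul_assoc, hκh2]
    rw [h1]
    refine le_trans hcs (mul_le_mul' ?_ ?_)
    · refine ENNReal.rpow_le_rpow ?_ (by norm_num)
      have h2 : ∀ ξ:ℝ, (κh (x-ξ))^(2:ℝ) = κ (x-ξ) := fun ξ => by rw [hsq, hκh2]
      simp_rw [h2]
      exact hκint x hx
    · refine le_of_eq ?_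
      congr 1
      rw [hWdef]
      refine lintegral_congr fun ξ => ?_
      rw [hsq, mul_mul_mul_comm, hκh2]
  -- Step C : Tonelli
  have hWswap : ∫⁻ x, W x ∂μ ≤ A2 * ∫⁻ ξ, g ξ * g ξ ∂μ := by
    have hκjm : Measurable fun p : ℝ × ℝ => κ (p.1 - p.2) := by
      apply Measurable.ennreal_ofReal
      apply Continuous.measurable
      exact Real.continuous_exp.comp ((continuous_const.mul ((continuous_fst.sub continuous_snd).abs)).neg)
    have hmeas2 : AEMeasurable (Function.uncurry fun x ξ => κ (x - ξ) * (g ξ * g ξ)) (μ.prod μ) := by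
      exact (hκjm.mul ((hgm.comp measurable_snd).mul (hgm.comp measurable_snd))).aemeasurable
    calc ∫⁻ x, W x ∂μ = ∫⁻ ξ, ∫⁻ x, κ (x - ξ) * (g ξ * g ξ) ∂μ ∂μ :=
          lintegral_lintegral_swap hmeas2
      _ = ∫⁻ ξ, (g ξ * g ξ) * ∫⁻ x, κ (x - ξ) ∂μ ∂μ := by
          refine lintegral_congr fun ξ => ?_
          rw [lintegral_mul_const' _ _ (ENNReal.mul_ne_top
            (ne_top_of_le_ne_top ENNReal.coe_ne_top (hgh ξ))
            (ne_top_of_le_ne_top ENNReal.coe_ne_top (hgh ξ))), mul_comm]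
      _ ≤ ∫⁻ ξ, (g ξ * g ξ) * A2 ∂μ := by
          refine lintegral_mono_ae ?_
          rw [hμdef]
          filter_upwards [ae_restrict_mem measurableSet_Ioo] with ξ hξ
          rw [← hμdef]
          exact mul_le_mul_right (hκintx ξ (Ioo_subset_Icc_self hξ)) _
      _ = A2 * ∫⁻ ξ, g ξ * g ξ ∂μ := by
          rw [lintegral_mul_const' _ _ hA2top, mul_comm]
  -- assemble
  rw [heLp, heLp]
  have hptw : ∀ᵐ x ∂μ, (‖∫ ξ in (0:ℝ)..1, g0ker n α ρ x ξ * f ξ‖₊ : ℝ≥0∞) ^ (2:ℝ)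
      ≤ (a * a * A2) * W x := by
    rw [hμdef]
    filter_upwards [ae_restrict_mem measurableSet_Ioo] with x hx
    have h1 : (‖∫ ξ in (0:ℝ)..1, g0ker n α ρ x ξ * f ξ‖₊ : ℝ≥0∞)
        ≤ a * (A2 ^ (1/2:ℝ) * W x ^ (1/2:ℝ)) :=
      le_trans (hstepA x) (mul_le_mul_right (hstepB x (Ioo_subset_Icc_self hx)) a)
    calc (‖∫ ξ in (0:ℝ)..1, g0ker n α ρ x ξ * f ξ‖₊ : ℝ≥0∞) ^ (2:ℝ)
        ≤ (a * (A2 ^ (1/2:ℝ) * W x ^ (1/2:ℝ))) ^ (2:ℝ) := ENNReal.rpow_le_rpow h1 (by norm_num)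
      _ = (a * a * A2) * W x := by
          rw [hsq]
          calc (a * (A2 ^ (1/2:ℝ) * W x ^ (1/2:ℝ))) * (a * (A2 ^ (1/2:ℝ) * W x ^ (1/2:ℝ)))
              = (a * a) * ((A2 ^ (1/2:ℝ) * A2 ^ (1/2:ℝ)) * (W x ^ (1/2:ℝ) * W x ^ (1/2:ℝ))) := by
                ring
            _ = (a * a * A2) * W x := by rw [hhalf, hhalf]; ring
  have hmain : ∫⁻ x, (‖∫ ξ in (0:ℝ)..1, g0ker n α ρ x ξ * f ξ‖₊ : ℝ≥0∞) ^ (2:ℝ) ∂μ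
      ≤ ((a * A2) * (a * A2)) * ∫⁻ ξ, (‖f ξ‖₊ : ℝ≥0∞) ^ (2:ℝ) ∂μ := by
    refine le_trans (lintegral_mono_ae hptw) ?_
    rw [lintegral_const_mul' _ _ (ENNReal.mul_ne_top (ENNReal.mul_ne_top hatop hatop) hA2top)]
    calc (a*a*A2) * ∫⁻ x, W x ∂μ ≤ (a*a*A2) * (A2 * ∫⁻ ξ, g ξ * g ξ ∂μ) :=
          mul_le_mul_right hWswap _
      _ = ((a*A2)*(a*A2)) * ∫⁻ ξ, g ξ * g ξ ∂μ := by ring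
      _ ≤ ((a*A2)*(a*A2)) * ∫⁻ ξ, (‖f ξ‖₊ : ℝ≥0∞) ^ (2:ℝ) ∂μ := by
          refine mul_le_mul_right (lintegral_mono fun ξ => ?_) _
          rw [hsq]
          exact mul_le_mul' (hgh ξ) (hgh ξ)
  refine le_trans (ENNReal.rpow_le_rpow hmain (by norm_num)) ?_
  rw [ENNReal.mul_rpow_of_nonneg _ _ (by norm_num), hsqrt]
  refine mul_le_mul' (le_of_eq ?_) le_rfl
  rw [hadef, hA2def, ← ENNReal.ofReal_mul (by positivity)]
  congr 1
  have hrpow : r^(n-1) * r = r^n := by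
    rw [← pow_succ]
    congr 1
    omega
  rw [hcdef, ← hrpow]
  field_simp
end
end
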